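/- arXiv:math/0204272 — 5 statements merged into one kernel-verified Lean document; each statement's English description precedes it below -/
import Mathlib

section
/- Let P be a real hyperbolic polynomial of degree n ≥ s + 1 with real roots x_1 ≤ … ≤ x_n (with multiplicity), and let ξ_1 ≤ … ≤ ξ_{n-s} be the roots (with multiplicity) of the s-th derivative P^(s). Then for every l with 1 ≤ l ≤ n - s one has x_l ≤ ξ_l ≤ x_{l+s}. -/
open Polynomial

/-!
Rolle's theorem on a half-line `(-∞, t]` or `(t, ∞)` shows that differentiation loses at most one
root there. Iterating `s` times, and using that `P⁽ˢ⁾` still has all its `n - s` roots real, the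
counting function `N_p(t) = #{roots of p ≤ t}` satisfies `N_{P⁽ˢ⁾}(t) ≤ N_P(t) ≤ N_{P⁽ˢ⁾}(t) + s`.
For a sorted list, `x_l ≤ t ↔ l < N(t)`, which turns these bounds into the interlacing.
-/

namespace List

variable {α : Type*} [LinearOrder α]

theorem SortedLE.getElem_le_iff_lt_countP {l : List α} (hl : l.SortedLE) {i : ℕ}
    (hi : i < l.length) (t : α) : l[i] ≤ t ↔ i < l.countP (· ≤ t) := by
  have hmono := List.sortedLE_iff_getElem_le_getElem_of_le.1 hl
  constructor
  · intro hit
    have hprefix : ∀ a ∈ l.take (i + 1), a ≤ t := by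
      intro a ha
      obtain ⟨j, hj, rfl⟩ := mem_take_iff_getElem.1 ha
      exact (hmono (by omega)).trans hit
    calc i < (l.take (i + 1)).length := by rw [length_take]; omega
      _ = (l.take (i + 1)).countP (· ≤ t) := (countP_eq_length.2 (by simpa using hprefix)).symm
      _ ≤ l.countP (· ≤ t) := (take_sublist _ _).countP_le
  · intro hcount
    by_contra! hti
    have hsuffix : (l.drop i).countP (· ≤ t) = 0 := by
      refine countP_eq_zero.2 fun a ha => ?_
      obtain ⟨j, hj, rfl⟩ := mem_drop_iff_getElem.1 ha
      simpa using hti.trans_le (hmono (by omega))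
    have hprefix := ((l.take i).countP_le_length (p := (· ≤ t))).trans (length_take_le i l)
    rw [← take_append_drop i l, countP_append, hsuffix] at hcount
    omega

end List

namespace Multiset

variable {α : Type*}

theorem countP_sort (r : α → α → Prop) [DecidableRel r] [IsTrans α r]
    [Std.Antisymm r] [Std.Total r] (M : Multiset α) (q : α → Prop) [DecidablePred q] :
    (M.sort r).countP q = (M.filter q).card := by
  rw [← coe_countP, sort_eq, countP_eq_card_filter]

theorem card_add_card_sdiff_le [DecidableEq α] {M N : Multiset α}
    (h : ∀ x, M.count x ≤ N.count x + 1) :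
    card M + (N.toFinset \ M.toFinset).card ≤ card N + M.toFinset.card := by
  have hle : M + (N.toFinset \ M.toFinset).val ≤ N + M.toFinset.val := by
    refine le_iff_count.2 fun x => ?_
    simp only [count_add, count_eq_of_nodup (Finset.nodup _), Finset.mem_val, Finset.mem_sdiff,
      mem_toFinset]
    simp only [← count_pos]
    have := h x
    split_ifs <;> omega
  simpa only [card_add, Finset.card_val] using card_le_card hle

end Multiset

namespace Polynomial

theorem card_roots_filter_le_derivative (p : ℝ[X]) (q : ℝ → Prop) [DecidablePred q]
    (hq : {x | q x}.OrdConnected) :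
    (p.roots.filter q).card ≤ ((derivative p).roots.filter q).card + 1 := by
  rcases eq_or_ne (derivative p) 0 with hp' | hp'
  · rw [eq_C_of_derivative_eq_zero hp']
    simp
  have hp : p ≠ 0 := ne_of_apply_ne derivative (by rwa [derivative_zero])
  have hrolle : (p.roots.filter q).toFinset.card ≤
      (((derivative p).roots.filter q).toFinset \ (p.roots.filter q).toFinset).card + 1 := by
    refine Finset.card_le_sdiff_of_interleaved fun x hx y hy hxy _ => ?_
    simp only [Multiset.mem_toFinset, Multiset.mem_filter, mem_roots hp] at hx hy
    obtain ⟨z, hz, hz'⟩ := exists_deriv_eq_zero hxy p.continuousOn (hx.1.trans hy.1.symm)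
    refine ⟨z, ?_, hz⟩
    rw [Multiset.mem_toFinset, Multiset.mem_filter, mem_roots hp', IsRoot, ← p.deriv]
    exact ⟨hz', hq.out hx.2 hy.2 (Set.Ioo_subset_Icc_self hz)⟩
  have hmult : ∀ x, (p.roots.filter q).count x ≤ ((derivative p).roots.filter q).count x + 1 := by
    intro x
    simp only [Multiset.count_filter, count_roots]
    split_ifs
    · have := rootMultiplicity_sub_one_le_derivative_rootMultiplicity p x
      omega
    · omega
  -- Each root of `p` loses at most one unit of multiplicity in `p'`; Rolle pays for these
  -- losses with roots of `p'` that are not roots of `p`.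
  have := Multiset.card_add_card_sdiff_le hmult
  omega

theorem card_roots_filter_le_iterate_derivative (p : ℝ[X]) (q : ℝ → Prop) [DecidablePred q]
    (hq : {x | q x}.OrdConnected) (k : ℕ) :
    (p.roots.filter q).card ≤ ((derivative^[k] p).roots.filter q).card + k := by
  induction k with
  | zero => simp
  | succ k ih =>
    rw [Function.iterate_succ_apply']
    have := card_roots_filter_le_derivative (derivative^[k] p) q hq
    omega

theorem card_roots_iterate_derivative_filter_le (p : ℝ[X]) (q : ℝ → Prop) [DecidablePred q]
    (hq : {x | ¬q x}.OrdConnected) {k : ℕ}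
    (hk : (derivative^[k] p).roots.card + k = p.roots.card) :
    ((derivative^[k] p).roots.filter q).card ≤ (p.roots.filter q).card := by
  have hcompl := card_roots_filter_le_iterate_derivative p (fun x => ¬q x) hq k
  have hp := congrArg Multiset.card (p.roots.filter_add_not q)
  have hpk := congrArg Multiset.card ((derivative^[k] p).roots.filter_add_not q)
  simp only [Multiset.card_add] at hp hpk
  omega

end Polynomial

theorem rolle_interlacing_of_hyperbolic_general
    (P : ℝ[X]) (n s : ℕ)
    (hhyp : P.roots.card = n)
    (xs ξs : List ℝ)
    (hxs : xs = P.roots.sort (· ≤ ·))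
    (hξs : ξs = (derivative^[s] P).roots.sort (· ≤ ·))
    (hξlen : ξs.length = n - s) :
    ∀ l, l < n - s → xs[l]! ≤ ξs[l]! ∧ ξs[l]! ≤ xs[l + s]! := by
  intro l hl
  have hxlen : xs.length = n := by rw [hxs, Multiset.length_sort, hhyp]
  have hξcard : (derivative^[s] P).roots.card + s = P.roots.card := by
    have : ξs.length = (derivative^[s] P).roots.card := by rw [hξs, Multiset.length_sort]
    omega
  have hxsorted : xs.SortedLE := hxs ▸ (Multiset.pairwise_sort _ _).sortedLE
  have hξsorted : ξs.SortedLE := hξs ▸ (Multiset.pairwise_sort _ _).sortedLE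
  have hlower (t : ℝ) : ξs.countP (· ≤ t) ≤ xs.countP (· ≤ t) := by
    have hIoi : {x : ℝ | ¬x ≤ t}.OrdConnected := by
      simp only [not_le]
      exact Set.ordConnected_Ioi
    simpa only [hxs, hξs, Multiset.countP_sort] using
      card_roots_iterate_derivative_filter_le P (· ≤ t) hIoi hξcard
  have hupper (t : ℝ) : xs.countP (· ≤ t) ≤ ξs.countP (· ≤ t) + s := by
    simpa only [hxs, hξs, Multiset.countP_sort] using
      card_roots_filter_le_iterate_derivative P (· ≤ t) Set.ordConnected_Iic s
  have hxl : l < xs.length := by omega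
  have hξl : l < ξs.length := by omega
  have hxls : l + s < xs.length := by omega
  rw [getElem!_pos xs l hxl, getElem!_pos ξs l hξl, getElem!_pos xs (l + s) hxls]
  constructor
  · rw [hxsorted.getElem_le_iff_lt_countP hxl]
    exact ((hξsorted.getElem_le_iff_lt_countP hξl _).1 le_rfl).trans_le (hlower _)
  · rw [hξsorted.getElem_le_iff_lt_countP hξl]
    have := (hxsorted.getElem_le_iff_lt_countP hxls _).1 le_rfl
    have := hupper xs[l + s]
    omega

theorem rolle_interlacing_of_hyperbolic
    (P : ℝ[X]) (n s : ℕ) (hs : 1 ≤ s) (hn : s + 1 ≤ n)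
    (hmonic : P.Monic) (hdeg : P.natDegree = n)
    (hhyp : P.roots.card = n)
    (xs ξs : List ℝ)
    (hxs : xs = P.roots.sort (· ≤ ·))
    (hξs : ξs = (derivative^[s] P).roots.sort (· ≤ ·))
    (hξlen : ξs.length = n - s) :
    ∀ l, l < n - s → xs[l]! ≤ ξs[l]! ∧ ξs[l]! ≤ xs[l + s]! :=
  rolle_interlacing_of_hyperbolic_general P n s hhyp xs ξs hxs hξs hξlen
end

section
/- Let P be a real hyperbolic polynomial of degree n with sorted roots x_1 ≤ … ≤ x_n and let ξ_1 ≤ … ≤ ξ_{n-s} be the sorted roots of P^(s). If for some l one has x_l = ξ_l, then x_l = x_{l+1} = … = x_{l+s} = ξ_l; similarly, if x_{l+s} = ξ_l, then x_l = x_{l+1} = … = x_{l+s} = ξ_l. -/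
/-!
Write `L_p(t)` and `G_p(t)` for the numbers of roots of `p`, counted with multiplicity, that are
`< t`, resp. `≤ t`; the `l`-th smallest root of `p` equals `t` iff `L_p(t) ≤ l < G_p(t)`.
By Rolle's theorem a real polynomial has at most one more root in an interval than its derivative.
For a hyperbolic `p`, applying this to the complementary interval shows that differentiation never
increases `L` or `G`; at a root `t` of `p` it keeps `L_p(t)` and lowers `G_p(t)` by exactly one.
Now follow `P, P', …, P^(s)`. If `x_l = ξ_l = t`, each of these derivatives vanishes at `t`
(as `L ≤ l < G` persists), so `G` drops by one at every step and `G_P(t) > l + s`. If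
`x_{l+s} = ξ_l = t`, the same bookkeeping with `L` gives `L_P(t) ≤ l`.
-/

open Polynomial

theorem Multiset.countP_le_eq_countP_lt_add_count {α : Type*} [LinearOrder α]
    (m : Multiset α) (t : α) : m.countP (· ≤ t) = m.countP (· < t) + m.count t := by
  induction m using Multiset.induction_on with
  | empty => simp
  | cons a m ih =>
    simp only [Multiset.countP_cons, Multiset.count_cons, ih]
    rcases lt_trichotomy a t with h | rfl | h
    · simp [h, h.le, h.ne', add_right_comm]
    · simp [add_assoc]
    · simp [not_le.2 h, not_lt.2 h.le, h.ne]

theorem Multiset.mem_of_countP_lt_lt_countP_le {α : Type*} [LinearOrder α] {m : Multiset α}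
    {t : α} (h : m.countP (· < t) < m.countP (· ≤ t)) : t ∈ m := by
  rw [Multiset.countP_le_eq_countP_lt_add_count] at h
  exact Multiset.count_pos.1 (by omega)

theorem List.Pairwise.getElem_iff_lt_countP {α : Type*} [Preorder α] {a : List α}
    (ha : a.Pairwise (· ≤ ·)) {r : α → Bool} (hr : ∀ x y, x ≤ y → r y → r x) {i : ℕ}
    (hi : i < a.length) : r a[i] ↔ i < a.countP r := by
  induction a generalizing i with
  | nil => simp at hi
  | cons x a ih =>
    rw [List.pairwise_cons] at ha
    have hx : ∀ y ∈ a, r y → r x := fun y hy => hr x y (ha.1 y hy)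
    rw [List.countP_cons]
    by_cases hrx : r x
    · cases i with
      | zero => simp [hrx]
      | succ i => simpa [hrx] using ih ha.2 (by simpa using hi)
    · have hcount : a.countP r = 0 := List.countP_eq_zero.2 fun y hy hry => hrx (hx y hy hry)
      cases i with
      | zero => simp [hrx, hcount]
      | succ i => simpa [hrx, hcount] using fun hry => hrx (hx _ (List.getElem_mem _) hry)

theorem Multiset.getElem!_sort_eq_iff {α : Type*} [LinearOrder α] [Inhabited α]
    {m : Multiset α} {i : ℕ} (hi : i < Multiset.card m) {t : α} :
    (m.sort (· ≤ ·))[i]! = t ↔ m.countP (· < t) ≤ i ∧ i < m.countP (· ≤ t) := by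
  have hi' : i < (m.sort (· ≤ ·)).length := by rwa [Multiset.length_sort]
  have hsort := Multiset.pairwise_sort m (· ≤ ·)
  have hcountP (r : α → Prop) [DecidablePred r] : m.countP r = (m.sort (· ≤ ·)).countP r := by
    conv_lhs => rw [← Multiset.sort_eq m (· ≤ ·)]
    exact Multiset.coe_countP _ _
  have hle := hsort.getElem_iff_lt_countP (r := (· ≤ t))
    (fun x y hxy hy => by simpa using le_trans hxy (by simpa using hy)) hi'
  have hlt := hsort.getElem_iff_lt_countP (r := (· < t))
    (fun x y hxy hy => by simpa using lt_of_le_of_lt hxy (by simpa using hy)) hi'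
  rw [getElem!_pos (m.sort (· ≤ ·)) i hi', hcountP, hcountP, ← not_lt, ← hlt, ← hle]
  simp only [decide_eq_true_eq]
  exact ⟨fun h => ⟨h.not_lt, h.le⟩, fun h => le_antisymm h.2 (not_lt.1 h.1)⟩

namespace Polynomial

variable {p : ℝ[X]} {q : ℝ → Prop} [DecidablePred q] {t : ℝ}

theorem card_toFinset_roots_filter_le_card_sdiff_succ (hq : {x | q x}.OrdConnected) :
    {x ∈ p.roots.toFinset | q x}.card ≤
      ({x ∈ p.derivative.roots.toFinset | q x} \ {x ∈ p.roots.toFinset | q x}).card + 1 := by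
  rcases eq_or_ne (derivative p) 0 with hp' | hp'
  · rw [eq_C_of_derivative_eq_zero hp']
    simp
  have hp : p ≠ 0 := ne_of_apply_ne derivative (by rwa [derivative_zero])
  refine Finset.card_le_sdiff_of_interleaved fun x hx y hy hxy _ => ?_
  simp only [Finset.mem_filter, Multiset.mem_toFinset, mem_roots hp] at hx hy
  obtain ⟨z, hz, hz'⟩ := exists_deriv_eq_zero hxy p.continuousOn (hx.1.trans hy.1.symm)
  refine ⟨z, ?_, hz⟩
  simp only [Finset.mem_filter, Multiset.mem_toFinset, mem_roots hp', IsRoot, ← p.deriv]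
  exact ⟨hz', hq.out hx.2 hy.2 (Set.Ioo_subset_Icc_self hz)⟩

theorem sum_rootMultiplicity_eq_countP_roots {s : Finset ℝ} (hsq : ∀ x ∈ s, q x)
    (hs : ∀ x ∈ p.roots, q x → x ∈ s) :
    ∑ x ∈ s, p.rootMultiplicity x = p.roots.countP q := by
  rw [Multiset.countP_eq_card_filter, ← Multiset.sum_count_eq_card (s := s)]
  · refine Finset.sum_congr rfl fun x hx => ?_
    rw [Multiset.count_filter_of_pos (hsq x hx), count_roots]
  · intro x hx
    rw [Multiset.mem_filter] at hx
    exact hs x hx.1 hx.2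

theorem countP_roots_le_countP_roots_derivative_succ (hq : {x | q x}.OrdConnected) :
    p.roots.countP q ≤ p.derivative.roots.countP q + 1 := by
  set A := {x ∈ p.roots.toFinset | q x}
  set B := {x ∈ p.derivative.roots.toFinset | q x}
  have hA : ∀ x ∈ A, q x := fun x hx => (Finset.mem_filter.1 hx).2
  have hB : ∀ x ∈ B, q x := fun x hx => (Finset.mem_filter.1 hx).2
  calc p.roots.countP q = ∑ x ∈ A, p.rootMultiplicity x :=
        (sum_rootMultiplicity_eq_countP_roots hA fun x hx hqx => by simp [A, hx, hqx]).symm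
    _ ≤ ∑ x ∈ A, (p.derivative.rootMultiplicity x + 1) := by
        gcongr with x
        have := rootMultiplicity_sub_one_le_derivative_rootMultiplicity p x
        omega
    _ = ∑ x ∈ A, p.derivative.rootMultiplicity x + A.card := by
        rw [Finset.sum_add_distrib, Finset.card_eq_sum_ones]
    _ ≤ ∑ x ∈ A, p.derivative.rootMultiplicity x + ((B \ A).card + 1) :=
        add_le_add_right (card_toFinset_roots_filter_le_card_sdiff_succ hq) _
    _ ≤ ∑ x ∈ A, p.derivative.rootMultiplicity x +
          (∑ x ∈ B \ A, p.derivative.rootMultiplicity x + 1) := by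
        rw [Finset.card_eq_sum_ones]
        gcongr with x hx
        simp only [B, Finset.mem_sdiff, Finset.mem_filter, Multiset.mem_toFinset] at hx
        rw [← count_roots]
        exact Multiset.one_le_count_iff_mem.2 hx.1.1
    _ = p.derivative.roots.countP q + 1 := by
        rw [← add_assoc, ← Finset.sum_union Finset.disjoint_sdiff, Finset.union_sdiff_self_eq_union]
        refine congrArg (· + 1) (sum_rootMultiplicity_eq_countP_roots ?_ ?_)
        · simpa only [Finset.forall_mem_union] using ⟨hA, hB⟩
        · intro x hx hqx
          simp [B, hx, hqx]

theorem card_roots_derivative (hp : Multiset.card p.roots = p.natDegree) :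
    Multiset.card p.derivative.roots = Multiset.card p.roots - 1 := by
  have := p.card_roots_le_derivative
  have := p.derivative.card_roots'
  have := p.natDegree_derivative_le
  omega

theorem card_roots_derivative_eq_natDegree (hp : Multiset.card p.roots = p.natDegree) :
    Multiset.card p.derivative.roots = p.derivative.natDegree := by
  have := card_roots_derivative hp
  have := p.derivative.card_roots'
  have := p.natDegree_derivative_le
  omega

theorem countP_roots_derivative_le (hp : Multiset.card p.roots = p.natDegree)
    (hq : {x | ¬q x}.OrdConnected) :
    p.derivative.roots.countP q ≤ p.roots.countP q := by
  have := countP_roots_le_countP_roots_derivative_succ (p := p) hq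
  have := Multiset.card_eq_countP_add_countP q p.roots
  have := Multiset.card_eq_countP_add_countP q p.derivative.roots
  have := card_roots_derivative hp
  omega

theorem card_roots_iterate_derivative (hp : Multiset.card p.roots = p.natDegree) (k : ℕ) :
    Multiset.card (derivative^[k] p).roots = (derivative^[k] p).natDegree := by
  induction k with
  | zero => exact hp
  | succ k ih =>
    rw [Function.iterate_succ_apply']
    exact card_roots_derivative_eq_natDegree ih

theorem countP_roots_iterate_derivative_le (hp : Multiset.card p.roots = p.natDegree)
    (hq : {x | ¬q x}.OrdConnected) (k : ℕ) :
    (derivative^[k] p).roots.countP q ≤ p.roots.countP q := by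
  induction k with
  | zero => rfl
  | succ k ih =>
    rw [Function.iterate_succ_apply']
    exact (countP_roots_derivative_le (card_roots_iterate_derivative hp k) hq).trans ih

theorem countP_roots_le_countP_roots_iterate_derivative_add (hq : {x | q x}.OrdConnected)
    (k : ℕ) : p.roots.countP q ≤ (derivative^[k] p).roots.countP q + k := by
  induction k with
  | zero => rfl
  | succ k ih =>
    rw [Function.iterate_succ_apply']
    have := countP_roots_le_countP_roots_derivative_succ (p := derivative^[k] p) hq
    omega

theorem countP_roots_derivative_lt_eq_of_mem (hp : Multiset.card p.roots = p.natDegree)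
    (ht : t ∈ p.roots) : p.derivative.roots.countP (· < t) = p.roots.countP (· < t) := by
  have hle := countP_roots_derivative_le hp (q := (· < t))
    (by simp only [not_lt]; exact Set.ordConnected_Ici)
  have hrolle :=
    countP_roots_le_countP_roots_derivative_succ (p := p) (Set.ordConnected_Iic (a := t))
  have hmult : p.derivative.rootMultiplicity t = p.rootMultiplicity t - 1 :=
    derivative_rootMultiplicity_of_root (isRoot_of_mem_roots ht)
  have hpos : 0 < p.rootMultiplicity t := count_roots p ▸ Multiset.count_pos.2 ht
  rw [Multiset.countP_le_eq_countP_lt_add_count, Multiset.countP_le_eq_countP_lt_add_count,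
    count_roots, count_roots] at hrolle
  omega

theorem countP_roots_derivative_le_add_one_of_mem (hp : Multiset.card p.roots = p.natDegree)
    (ht : t ∈ p.roots) :
    p.derivative.roots.countP (· ≤ t) + 1 = p.roots.countP (· ≤ t) := by
  have hmult : p.derivative.rootMultiplicity t = p.rootMultiplicity t - 1 :=
    derivative_rootMultiplicity_of_root (isRoot_of_mem_roots ht)
  have hpos : 0 < p.rootMultiplicity t := count_roots p ▸ Multiset.count_pos.2 ht
  rw [Multiset.countP_le_eq_countP_lt_add_count, Multiset.countP_le_eq_countP_lt_add_count,
    count_roots, count_roots, countP_roots_derivative_lt_eq_of_mem hp ht]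
  omega

theorem add_lt_countP_roots_le_of_iterate_derivative (hp : Multiset.card p.roots = p.natDegree)
    {k l : ℕ} (hL : p.roots.countP (· < t) ≤ l)
    (hG : l < (derivative^[k] p).roots.countP (· ≤ t)) :
    l + k < p.roots.countP (· ≤ t) := by
  induction k generalizing p with
  | zero => exact hG
  | succ k ih =>
    rw [Function.iterate_succ_apply] at hG
    have hGp := countP_roots_iterate_derivative_le hp (q := (· ≤ t))
      (by simp only [not_le]; exact Set.ordConnected_Ioi) (k + 1)
    rw [Function.iterate_succ_apply] at hGp
    have ht : t ∈ p.roots := Multiset.mem_of_countP_lt_lt_countP_le (by omega)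
    have := ih (card_roots_derivative_eq_natDegree hp)
      ((countP_roots_derivative_lt_eq_of_mem hp ht).trans_le hL) hG
    have := countP_roots_derivative_le_add_one_of_mem hp ht
    omega

theorem countP_roots_lt_le_of_iterate_derivative (hp : Multiset.card p.roots = p.natDegree)
    {k l : ℕ} (hG : l + k < p.roots.countP (· ≤ t))
    (hL : (derivative^[k] p).roots.countP (· < t) ≤ l) :
    p.roots.countP (· < t) ≤ l := by
  induction k generalizing p with
  | zero => exact hL
  | succ k ih =>
    have hLp := countP_roots_le_countP_roots_iterate_derivative_add (p := p)
      (Set.ordConnected_Iio (a := t)) (k + 1)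
    rw [Function.iterate_succ_apply] at hL hLp
    have ht : t ∈ p.roots := Multiset.mem_of_countP_lt_lt_countP_le (by omega)
    have := countP_roots_derivative_le_add_one_of_mem hp ht
    rw [← countP_roots_derivative_lt_eq_of_mem hp ht]
    exact ih (card_roots_derivative_eq_natDegree hp) (by omega) hL

end Polynomial

theorem equality_propagation_in_arrangement_general
    (P : ℝ[X]) (n s : ℕ) (hdeg : P.natDegree = n) (hhyp : P.roots.card = n)
    (xs ξs : List ℝ)
    (hxs : xs = P.roots.sort (· ≤ ·))
    (hξs : ξs = (derivative^[s] P).roots.sort (· ≤ ·))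
    (hξlen : ξs.length = n - s)
    (l : ℕ) (hl : l < n - s) :
    (xs[l]! = ξs[l]! → ∀ j ≤ s, xs[l + j]! = ξs[l]!) ∧
    (xs[l + s]! = ξs[l]! → ∀ j ≤ s, xs[l + j]! = ξs[l]!) := by
  have hP : Multiset.card P.roots = P.natDegree := hhyp.trans hdeg.symm
  have hx (j : ℕ) (hj : j ≤ s) : l + j < Multiset.card P.roots := by omega
  have hξ : l < Multiset.card (derivative^[s] P).roots := by
    rw [← Multiset.length_sort (· ≤ ·), ← hξs]; omega
  subst hxs hξs
  set t := ((derivative^[s] P).roots.sort (· ≤ ·))[l]!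
  obtain ⟨hL, hG⟩ := (Multiset.getElem!_sort_eq_iff hξ).1 rfl
  have hblock (hLP : P.roots.countP (· < t) ≤ l) (hGP : l + s < P.roots.countP (· ≤ t))
      (j : ℕ) (hj : j ≤ s) : (P.roots.sort (· ≤ ·))[l + j]! = t :=
    (Multiset.getElem!_sort_eq_iff (hx j hj)).2 ⟨by omega, by omega⟩
  refine ⟨fun h => ?_, fun h => ?_⟩
  · obtain ⟨hLP, -⟩ := (Multiset.getElem!_sort_eq_iff (hx 0 (Nat.zero_le s))).1 h
    exact hblock hLP (add_lt_countP_roots_le_of_iterate_derivative hP hLP hG)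
  · obtain ⟨-, hGP⟩ := (Multiset.getElem!_sort_eq_iff (hx s le_rfl)).1 h
    exact hblock (countP_roots_lt_le_of_iterate_derivative hP hGP hL) hGP

theorem equality_propagation_in_arrangement
    (P : ℝ[X]) (n s : ℕ) (hs : 1 ≤ s) (hn : s + 1 ≤ n)
    (hP : P ≠ 0) (hdeg : P.natDegree = n) (hhyp : P.roots.card = n)
    (xs ξs : List ℝ)
    (hxs : xs = P.roots.sort (· ≤ ·))
    (hξs : ξs = (derivative^[s] P).roots.sort (· ≤ ·))
    (hξlen : ξs.length = n - s)
    (l : ℕ) (hl : l < n - s) :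
    (xs[l]! = ξs[l]! → ∀ j ≤ s, xs[l + j]! = ξs[l]!) ∧
    (xs[l + s]! = ξs[l]! → ∀ j ≤ s, xs[l + j]! = ξs[l]!) :=
  equality_propagation_in_arrangement_general P n s hdeg hhyp xs ξs hxs hξs hξlen l hl
end

section
/- Let P be a real polynomial of degree n with exactly m conjugate pairs of non-real complex roots, and let r be a real root of P of multiplicity d with 0 ≤ d ≤ s. If r is a root of P^(s) of multiplicity g ≥ 1, then g ≤ 2m + 1 and d < s. -/
/-!
Let `N(p)` be the number of non-real roots of `p`. Since `deg p' = deg p - 1` and, by Rolle,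
`p'` loses at most one real root, `N(p') ≤ N(p)`. If moreover `p(r) ≠ 0`, then `r` is a critical
point not accounted for by Rolle's theorem, and counting it with its multiplicity `k` gives
`k ≤ N(p) + 1`. Along `P, P', P'', …` the multiplicity at `r` drops by one while `r` stays a root,
and `P⁽ᵈ⁾(r) ≠ 0` for `d = mult_r P`; so the multiplicity at `r` of `P⁽ˢ⁾` is at most
`N(P) + 1 = 2m + 1` once `s ≥ d`, and it is `0` for `s = d`.
-/

open Polynomial

namespace Polynomial

noncomputable def nonrealRoots (p : ℝ[X]) : Multiset ℂ :=
  (p.map (algebraMap ℝ ℂ)).roots.filter (fun z => z.im ≠ 0)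

theorem roots_map_filter_im_eq_zero (p : ℝ[X]) :
    (p.map (algebraMap ℝ ℂ)).roots.filter (fun z => z.im = 0) = p.roots.map (algebraMap ℝ ℂ) := by
  have hinj : Function.Injective (algebraMap ℝ ℂ) := (algebraMap ℝ ℂ).injective
  ext z
  rw [Multiset.count_filter]
  split_ifs with hz
  · rw [show z = algebraMap ℝ ℂ z.re from Complex.ext rfl (by simp [hz]),
      Multiset.count_map_eq_count' _ _ hinj, count_roots, count_roots,
      ← eq_rootMultiplicity_map hinj]
  · refine (Multiset.count_eq_zero.mpr fun hmem => ?_).symm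
    obtain ⟨x, -, rfl⟩ := Multiset.mem_map.mp hmem
    exact hz (Complex.ofReal_im x)

theorem natDegree_eq_card_nonrealRoots_add_card_roots (p : ℝ[X]) :
    p.natDegree = Multiset.card p.nonrealRoots + Multiset.card p.roots := by
  have hsplit := (IsAlgClosed.splits (p.map (algebraMap ℝ ℂ))).natDegree_eq_card_roots
  rw [natDegree_map] at hsplit
  rw [hsplit, ← Multiset.card_map (algebraMap ℝ ℂ), ← roots_map_filter_im_eq_zero,
    nonrealRoots, ← Multiset.card_add]
  simp_rw [← not_ne_iff (a := Complex.im _)]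
  rw [Multiset.filter_add_not]

theorem card_nonrealRoots_derivative_le (p : ℝ[X]) :
    Multiset.card (derivative p).nonrealRoots ≤ Multiset.card p.nonrealRoots := by
  have := natDegree_eq_card_nonrealRoots_add_card_roots p
  have := natDegree_eq_card_nonrealRoots_add_card_roots (derivative p)
  have := natDegree_derivative p
  have := card_roots_le_derivative p
  omega

theorem card_nonrealRoots_iterate_derivative_le (p : ℝ[X]) (k : ℕ) :
    Multiset.card (derivative^[k] p).nonrealRoots ≤ Multiset.card p.nonrealRoots := by
  induction k with
  | zero => rfl
  | succ k ih =>
    rw [Function.iterate_succ_apply']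
    exact (card_nonrealRoots_derivative_le _).trans ih

open Finset in
/-- Sharpens `Polynomial.card_roots_le_derivative`. -/
theorem card_roots_add_sum_rootMultiplicity_derivative_sub_one_le (p : ℝ[X]) :
    Multiset.card p.roots + ∑ x ∈ p.derivative.roots.toFinset \ p.roots.toFinset,
      (p.derivative.rootMultiplicity x - 1) ≤ Multiset.card p.derivative.roots + 1 := by
  set F := p.roots.toFinset
  set G := p.derivative.roots.toFinset
  have hG : ∀ x ∈ G \ F, 1 ≤ p.derivative.rootMultiplicity x := fun x hx => by
    rw [← count_roots, Nat.one_le_iff_ne_zero, Ne, Multiset.count_eq_zero, not_not,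
      ← Multiset.mem_toFinset]
    exact (mem_sdiff.mp hx).1
  calc Multiset.card p.roots + ∑ x ∈ G \ F, (p.derivative.rootMultiplicity x - 1)
      = ∑ x ∈ F, p.rootMultiplicity x + ∑ x ∈ G \ F, (p.derivative.rootMultiplicity x - 1) := by
        rw [← Multiset.toFinset_sum_count_eq]; simp only [count_roots, F]
    _ ≤ ∑ x ∈ F, (p.derivative.rootMultiplicity x + 1) +
          ∑ x ∈ G \ F, (p.derivative.rootMultiplicity x - 1) := by
        gcongr with x
        have := rootMultiplicity_sub_one_le_derivative_rootMultiplicity p x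
        omega
    _ ≤ ∑ x ∈ F, p.derivative.rootMultiplicity x + ((G \ F).card + 1) +
          ∑ x ∈ G \ F, (p.derivative.rootMultiplicity x - 1) := by
        rw [sum_add_distrib, sum_const, smul_eq_mul, mul_one]
        gcongr
        exact card_roots_toFinset_le_card_roots_derivative_sdiff_roots_succ p
    _ = ∑ x ∈ F, p.derivative.rootMultiplicity x +
          ∑ x ∈ G \ F, p.derivative.rootMultiplicity x + 1 := by
        have : ∑ x ∈ G \ F, p.derivative.rootMultiplicity x =
            ∑ x ∈ G \ F, (p.derivative.rootMultiplicity x - 1) + (G \ F).card := by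
          rw [card_eq_sum_ones, ← sum_add_distrib]
          exact sum_congr rfl fun x hx => (Nat.sub_add_cancel (hG x hx)).symm
        omega
    _ = ∑ x ∈ F ∪ G, p.derivative.roots.count x + 1 := by
        rw [← union_sdiff_self_eq_union, sum_union disjoint_sdiff]
        simp only [count_roots]
    _ = Multiset.card p.derivative.roots + 1 := by
        rw [Multiset.sum_count_eq_card fun x hx => mem_union_right _ (Multiset.mem_toFinset.mpr hx)]

theorem rootMultiplicity_derivative_le_of_not_isRoot {p : ℝ[X]} {r : ℝ} (hr : ¬ p.IsRoot r) :
    p.derivative.rootMultiplicity r ≤ Multiset.card p.nonrealRoots + 1 := by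
  rcases Nat.eq_zero_or_pos p.natDegree with hdeg | hdeg
  · simp [derivative_of_natDegree_zero hdeg]
  have hp : p ≠ 0 := by rintro rfl; exact hr (by simp)
  have hsum : p.derivative.rootMultiplicity r - 1 ≤
      ∑ x ∈ p.derivative.roots.toFinset \ p.roots.toFinset,
        (p.derivative.rootMultiplicity x - 1) := by
    by_cases hr' : r ∈ p.derivative.roots.toFinset
    · refine Finset.single_le_sum (f := fun x => p.derivative.rootMultiplicity x - 1)
        (fun _ _ => Nat.zero_le _) (Finset.mem_sdiff.mpr ⟨hr', ?_⟩)
      rwa [Multiset.mem_toFinset, mem_roots hp]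
    · rw [← count_roots, Multiset.count_eq_zero.mpr (by simpa using hr')]
      exact Nat.zero_le _
  have := card_roots_add_sum_rootMultiplicity_derivative_sub_one_le p
  have := natDegree_eq_card_nonrealRoots_add_card_roots p
  have := natDegree_eq_card_nonrealRoots_add_card_roots (derivative p)
  have := natDegree_derivative p
  omega

theorem rootMultiplicity_iterate_derivative_le (p : ℝ[X]) (r : ℝ) (s : ℕ) :
    (derivative^[s] p).rootMultiplicity r ≤
      max (p.rootMultiplicity r - s) (Multiset.card p.nonrealRoots + 1) := by
  induction s with
  | zero => exact le_max_left _ _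
  | succ s ih =>
    rw [Function.iterate_succ_apply']
    by_cases hr : (derivative^[s] p).IsRoot r
    · rw [derivative_rootMultiplicity_of_root hr]
      omega
    · exact ((rootMultiplicity_derivative_le_of_not_isRoot hr).trans
        (Nat.add_le_add_right (card_nonrealRoots_iterate_derivative_le p s) 1)).trans
        (le_max_right _ _)

theorem not_isRoot_iterate_derivative_rootMultiplicity {R : Type*} [CommRing R] [NoZeroDivisors R]
    [CharZero R] {p : R[X]} (hp : p ≠ 0) (t : R) :
    ¬ (derivative^[p.rootMultiplicity t] p).IsRoot t := by
  rw [IsRoot, eval_iterate_derivative_rootMultiplicity, nsmul_eq_mul]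
  exact mul_ne_zero (Nat.cast_ne_zero.mpr (Nat.factorial_ne_zero _))
    (eval_divByMonic_pow_rootMultiplicity_ne_zero t hp)

end Polynomial

theorem mult_bound_at_low_order_root_general
    (P : ℝ[X]) (m s d g : ℕ) (r : ℝ) (hP : P ≠ 0)
    (hnonreal : ((P.map (algebraMap ℝ ℂ)).roots.filter (fun z => z.im ≠ 0)).card = 2 * m)
    (hd : P.rootMultiplicity r = d) (hds : d ≤ s)
    (hg : (derivative^[s] P).rootMultiplicity r = g) (hg1 : 1 ≤ g) :
    g ≤ 2 * m + 1 ∧ d < s := by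
  have hbound := P.rootMultiplicity_iterate_derivative_le r s
  rw [hg, hd, Nat.sub_eq_zero_of_le hds, nonrealRoots, hnonreal] at hbound
  refine ⟨by simpa using hbound, hds.lt_of_ne ?_⟩
  rintro rfl
  have := rootMultiplicity_eq_zero (not_isRoot_iterate_derivative_rootMultiplicity hP r)
  rw [hd] at this
  omega

theorem mult_bound_at_low_order_root
    (P : ℝ[X]) (n m s d g : ℕ) (r : ℝ) (hP : P ≠ 0) (hdeg : P.natDegree = n)
    (hnonreal : ((P.map (algebraMap ℝ ℂ)).roots.filter (fun z => z.im ≠ 0)).card = 2 * m)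
    (hd : P.rootMultiplicity r = d) (hds : d ≤ s)
    (hg : (derivative^[s] P).rootMultiplicity r = g) (hg1 : 1 ≤ g) :
    g ≤ 2 * m + 1 ∧ d < s :=
  mult_bound_at_low_order_root_general P m s d g r hP hnonreal hd hds hg hg1
end

section
/- All complex roots of the derivative P' of a nonconstant complex polynomial P lie in the convex hull of the set of roots of P (Gauss–Lucas theorem). In particular, if all roots of a real polynomial P have imaginary part of absolute value at most T, then the same holds for all roots of P^(s). -/
open Polynomial

/-!
A convex set containing the roots of `P` contains their convex hull, so by Gauss–Lucas it also
contains the roots of `P'`, and by induction those of every `P^(s)`. The strip `|Im z| ≤ T` is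
such a convex set.
-/

namespace Polynomial

theorem mem_convexHull_of_mem_roots_derivative {P : ℂ[X]} (hP : 0 < P.degree) {z : ℂ}
    (hz : z ∈ (derivative P).roots) : z ∈ convexHull ℝ {w : ℂ | P.IsRoot w} := by
  have hP₀ : P ≠ 0 := ne_zero_of_degree_gt hP
  have hrootSet : P.rootSet ℂ = {w : ℂ | P.IsRoot w} := by
    ext w
    simp [mem_rootSet, hP₀]
  rw [← hrootSet]
  exact rootSet_derivative_subset_convexHull_rootSet hP
    (mem_rootSet.mpr ⟨(mem_roots'.mp hz).1, by simpa using (mem_roots'.mp hz).2⟩)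

theorem roots_derivative_subset_of_convex {P : ℂ[X]} {S : Set ℂ} (hS : Convex ℝ S)
    (hroots : ∀ w ∈ P.roots, w ∈ S) : ∀ z ∈ (derivative P).roots, z ∈ S := by
  intro z hz
  have hP : 0 < P.degree := by
    by_contra! hdeg
    rw [eq_C_of_degree_le_zero hdeg, derivative_C, roots_zero] at hz
    exact Multiset.notMem_zero z hz
  refine convexHull_min (fun w hw ↦ hroots w ?_) hS (mem_convexHull_of_mem_roots_derivative hP hz)
  exact mem_roots'.mpr ⟨ne_zero_of_degree_gt hP, hw⟩

theorem roots_iterate_derivative_subset_of_convex {P : ℂ[X]} {S : Set ℂ} (hS : Convex ℝ S)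
    (hroots : ∀ w ∈ P.roots, w ∈ S) (s : ℕ) : ∀ z ∈ (derivative^[s] P).roots, z ∈ S := by
  induction s with
  | zero => exact hroots
  | succ n ih =>
    rw [Function.iterate_succ_apply']
    exact roots_derivative_subset_of_convex hS ih

end Polynomial

theorem convex_abs_im_le (T : ℝ) : Convex ℝ {z : ℂ | |z.im| ≤ T} := by
  simpa only [abs_le, Set.ofPred_and] using
    (convex_halfSpace_im_ge (-T)).inter (convex_halfSpace_im_le T)

theorem gauss_lucas_and_imaginary_part_bound :
    (∀ P : ℂ[X], 0 < P.degree →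
      ∀ z ∈ (derivative P).roots, z ∈ convexHull ℝ {w : ℂ | P.IsRoot w}) ∧
    (∀ (P : ℝ[X]) (s : ℕ) (T : ℝ), P ≠ 0 → 0 ≤ T →
      (∀ z ∈ (P.map (algebraMap ℝ ℂ)).roots, |z.im| ≤ T) →
      ∀ z ∈ ((derivative^[s] P).map (algebraMap ℝ ℂ)).roots, |z.im| ≤ T) := by
  refine ⟨fun P hP z hz ↦ mem_convexHull_of_mem_roots_derivative hP hz, ?_⟩
  intro P s T _ _ hroots
  rw [← iterate_derivative_map]
  exact roots_iterate_derivative_subset_of_convex (convex_abs_im_le T) hroots s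
end

section
/- Let μ ≥ 0 and ν ≥ 1 be integers and let Q₂(x, a) be a polynomial in x of degree ≤ ν - 1 with coefficients depending continuously on a and with Q₂(0, a) = 0 for all a. Then for all sufficiently small a > 0, the polynomial Q₁(x) = x^μ (x^ν + a + a·Q₂(x, a)) has a real root of multiplicity exactly μ at 0, and if ν is even all its remaining ν roots are non-real. -/
open Polynomial Topology

/-!
The factor `P = X^ν + a + a·Q₂(·, a)` takes the value `a ≠ 0` at `0`, so `X^μ · P` vanishes
to order exactly `μ` there. For even `ν`, `P` is positive on `ℝ` once `a` is small: `Q₂(·, a)` has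
no constant term, so splitting at `|x| = δ` gives `|Q₂(x, a)| ≤ S (δ + |x|^ν / δ^ν)` with `S` the
sum of the absolute values of its coefficients, which stays below some `M` near `a = 0`; with
`δ = 1/M` and `a M^(ν+1) ≤ 1` the term `a·Q₂` is dominated by `a + x^ν`. Hence all `ν` complex
roots of `P` are non-real.
-/

theorem pow_le_add_div_pow {t δ : ℝ} {k n : ℕ} (ht : 0 ≤ t) (hδ : 0 < δ) (hδ1 : δ ≤ 1)
    (hk : 1 ≤ k) (hkn : k ≤ n) : t ^ k ≤ δ + t ^ n / δ ^ n := by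
  rcases le_or_gt t δ with htδ | hδt
  · have hk_le : t ^ k ≤ t := pow_le_of_le_one ht (htδ.trans hδ1) (by omega)
    have : 0 ≤ t ^ n / δ ^ n := by positivity
    linarith
  · have hk_le : t ^ k ≤ t ^ n / δ ^ n := by
      rw [le_div_iff₀ (by positivity)]
      calc t ^ k * δ ^ n ≤ t ^ k * δ ^ (n - k) :=
            mul_le_mul_of_nonneg_left (pow_le_pow_of_le_one hδ.le hδ1 (Nat.sub_le n k))
              (by positivity)
        _ ≤ t ^ k * t ^ (n - k) := by gcongr
        _ = t ^ n := by rw [← pow_add, Nat.add_sub_cancel' hkn]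
    linarith

theorem abs_eval_le_of_coeff_zero_eq_zero {Q : ℝ[X]} {n : ℕ} (hdeg : Q.natDegree < n)
    (h0 : Q.coeff 0 = 0) {δ : ℝ} (hδ : 0 < δ) (hδ1 : δ ≤ 1) (x : ℝ) :
    |Q.eval x| ≤ (∑ k ∈ Finset.range n, |Q.coeff k|) * (δ + |x| ^ n / δ ^ n) := by
  rw [eval_eq_sum_range' hdeg, Finset.sum_mul]
  refine (Finset.abs_sum_le_sum_abs _ _).trans (Finset.sum_le_sum fun k hk => ?_)
  rw [abs_mul, abs_pow]
  rcases Nat.eq_zero_or_pos k with rfl | hk0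
  · simp [h0]
  · exact mul_le_mul_of_nonneg_left
      (pow_le_add_div_pow (abs_nonneg x) hδ hδ1 hk0 (Finset.mem_range.mp hk).le) (abs_nonneg _)

theorem pow_add_add_mul_eval_pos {Q : ℝ[X]} {n : ℕ} (hn : Even n) (hdeg : Q.natDegree < n)
    (h0 : Q.coeff 0 = 0) {M a : ℝ} (hM : 1 ≤ M) (hQM : ∑ k ∈ Finset.range n, |Q.coeff k| < M)
    (ha : 0 < a) (haM : a * M ^ (n + 1) ≤ 1) (x : ℝ) :
    0 < x ^ n + a + a * Q.eval x := by
  set S := ∑ k ∈ Finset.range n, |Q.coeff k|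
  have hM0 : 0 < M := by positivity
  have hQ := abs_eval_le_of_coeff_zero_eq_zero hdeg h0 (inv_pos.mpr hM0)
    (inv_le_one_of_one_le₀ hM) x
  have hSM : a * S * M ^ n ≤ 1 := by
    calc a * S * M ^ n ≤ a * M * M ^ n := by gcongr
      _ = a * M ^ (n + 1) := by ring
      _ ≤ 1 := haM
  have hsmall : a * |Q.eval x| < a + |x| ^ n :=
    calc a * |Q.eval x| ≤ a * (S * (M⁻¹ + |x| ^ n / M⁻¹ ^ n)) := by gcongr
      _ = a * (S / M) + a * S * M ^ n * |x| ^ n := by rw [inv_pow, div_inv_eq_mul]; ring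
      _ < a * 1 + 1 * |x| ^ n :=
          add_lt_add_of_lt_of_le (mul_lt_mul_of_pos_left ((div_lt_one hM0).mpr hQM) ha)
            (mul_le_mul_of_nonneg_right hSM (by positivity))
      _ = a + |x| ^ n := by ring
  have hneg := mul_le_mul_of_nonneg_left (neg_abs_le (Q.eval x)) ha.le
  rw [← hn.pow_abs]
  linarith

theorem rootMultiplicity_zero_X_pow_mul {R : Type*} [CommRing R] [IsDomain R] {p : R[X]}
    (hp : p.eval 0 ≠ 0) (m : ℕ) : (X ^ m * p).rootMultiplicity 0 = m := by
  have hp0 : p ≠ 0 := by rintro rfl; simp at hp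
  rw [rootMultiplicity_mul (mul_ne_zero (pow_ne_zero _ X_ne_zero) hp0),
    rootMultiplicity_eq_zero hp, add_zero]
  simpa using rootMultiplicity_X_sub_C_pow (0 : R) m

theorem natDegree_X_pow_add_C_add_C_mul {R : Type*} [Semiring R] [Nontrivial R] {Q : R[X]}
    {n : ℕ} (a : R) (hQ : Q.natDegree < n) : (X ^ n + C a + C a * Q).natDegree = n := by
  have hlow : (C a + C a * Q).natDegree < n :=
    (natDegree_add_le _ _).trans_lt
      (max_lt (by rw [natDegree_C]; omega) ((natDegree_C_mul_le a Q).trans_lt hQ))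
  rw [add_assoc, natDegree_add_eq_left_of_natDegree_lt (by rwa [natDegree_X_pow]),
    natDegree_X_pow]

theorem im_ne_zero_of_mem_roots_map {p : ℝ[X]} (hp : ∀ x, p.eval x ≠ 0) {z : ℂ}
    (hz : z ∈ (p.map (algebraMap ℝ ℂ)).roots) : z.im ≠ 0 := by
  intro him
  have hz_re : z = algebraMap ℝ ℂ z.re := Complex.ext rfl (by simp [him])
  have hroot := isRoot_of_mem_roots hz
  rw [hz_re, IsRoot, eval_map, eval₂_at_apply, map_eq_zero] at hroot
  exact hp z.re hroot

theorem card_filter_im_ne_zero_roots_X_pow_mul {p : ℝ[X]} (hp : ∀ x, p.eval x ≠ 0) (m : ℕ) :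
    (((X ^ m * p).map (algebraMap ℝ ℂ)).roots.filter (fun z : ℂ => z.im ≠ 0)).card
      = p.natDegree := by
  have hp0 : p ≠ 0 := by rintro rfl; exact hp 0 eval_zero
  have hmap0 : p.map (algebraMap ℝ ℂ) ≠ 0 := Polynomial.map_ne_zero hp0
  have hzero : (m • {0} : Multiset ℂ).filter (fun z => z.im ≠ 0) = 0 :=
    Multiset.filter_eq_nil.mpr fun z hz => by
      simp [Multiset.mem_singleton.mp (Multiset.mem_of_mem_nsmul hz)]
  rw [Polynomial.map_mul, Polynomial.map_pow, map_X,
    roots_mul (mul_ne_zero (pow_ne_zero _ X_ne_zero) hmap0), roots_pow, roots_X,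
    Multiset.filter_add, hzero, zero_add,
    Multiset.filter_eq_self.mpr fun _ hz => im_ne_zero_of_mem_roots_map hp hz]
  exact IsAlgClosed.card_roots_map_eq_natDegree_of_injective p (algebraMap ℝ ℂ).injective

theorem small_perturbation_keeps_complex_roots
    (μ ν : ℕ) (hν : 1 ≤ ν) (Q₂ : ℝ → ℝ[X])
    (hdeg : ∀ a, (Q₂ a).natDegree ≤ ν - 1)
    (hcont : ∀ k, Continuous fun a => (Q₂ a).coeff k)
    (hzero : ∀ a, (Q₂ a).eval 0 = 0) :
    ∃ ε > 0, ∀ a : ℝ, 0 < a → a < ε →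
      (X ^ μ * (X ^ ν + C a + C a * Q₂ a) : ℝ[X]).rootMultiplicity 0 = μ ∧
      (Even ν →
        (((X ^ μ * (X ^ ν + C a + C a * Q₂ a) : ℝ[X]).map (algebraMap ℝ ℂ)).roots.filter
            (fun z => z.im ≠ 0)).card = ν) := by
  have hdeg' (a : ℝ) : (Q₂ a).natDegree < ν := by have := hdeg a; omega
  set S : ℝ → ℝ := fun a => ∑ k ∈ Finset.range ν, |(Q₂ a).coeff k|
  have hS : Continuous S := continuous_finsetSum _ fun k _ => (hcont k).abs
  set M := S 0 + 1
  have hM : 1 ≤ M := le_add_of_nonneg_left (Finset.sum_nonneg fun _ _ => abs_nonneg _)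
  have hsmall : ∀ᶠ a in 𝓝 0, S a < M ∧ a * M ^ (ν + 1) < 1 :=
    (hS.continuousAt.eventually_lt continuousAt_const (lt_add_one _)).and
      ((continuous_mul_const _).continuousAt.eventually_lt continuousAt_const
        (by rw [zero_mul]; exact one_pos))
  obtain ⟨ε, hε, hε_small⟩ := Metric.eventually_nhds_iff.mp hsmall
  refine ⟨ε, hε, fun a ha haε => ?_⟩
  obtain ⟨hSa, haM⟩ := hε_small (by rwa [Real.dist_0_eq_abs, abs_of_pos ha])
  have heval (x : ℝ) : (X ^ ν + C a + C a * Q₂ a).eval x = x ^ ν + a + a * (Q₂ a).eval x := by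
    simp
  have heval_zero : (X ^ ν + C a + C a * Q₂ a).eval 0 ≠ 0 := by
    rw [heval, hzero, zero_pow (by omega)]
    simpa using ha.ne'
  refine ⟨rootMultiplicity_zero_X_pow_mul heval_zero μ, fun hev => ?_⟩
  have hpos (x : ℝ) : 0 < (X ^ ν + C a + C a * Q₂ a).eval x := by
    rw [heval]
    exact pow_add_add_mul_eval_pos hev (hdeg' a) (by rw [coeff_zero_eq_eval_zero, hzero]) hM hSa
      ha haM.le x
  rw [card_filter_im_ne_zero_roots_X_pow_mul fun x => (hpos x).ne',
    natDegree_X_pow_add_C_add_C_mul a (hdeg' a)]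
end
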